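/- Assume that the cost per stage g is bounded over X×U×W and that there exists a uniformly proper policy. Then Ĵ is the largest solution of Bellman's equation within the set B: Ĵ ∈ B, Ĵ satisfies Bellman's equation, and if J̃ ∈ B is another function satisfying Bellman's equation, then J̃ ≤ Ĵ. -/

import Mathlib

open scoped ENNReal
open Filter
open scoped Classical NNReal

/-- A stochastic shortest path (SSP) problem with state space `X`, control space `U`,
countable disturbance space `W`, a cost-free absorbing termination state `t`,
nonempty control constraint sets `Uc x ⊆ U`, disturbance distributions `P x u`,
system function `f`, and nonnegative (finite-valued) cost per stage `g`. -/
structure SSP (X U W : Type*) [Countable W] where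
  t : X
  Uc : X → Set U
  Uc_nonempty : ∀ x, (Uc x).Nonempty
  P : X → U → PMF W
  f : X → U → W → X
  g : X → U → W → ℝ≥0∞
  g_lt_top : ∀ x u w, g x u w < ⊤
  f_absorb : ∀ u ∈ Uc t, ∀ w, f t u w = t
  g_zero : ∀ u ∈ Uc t, ∀ w, g t u w = 0

namespace SSP

variable {X U W : Type*} [Countable W] (S : SSP X U W)

/-- A policy `π = (μ₀, μ₁, …)` is admissible if `μ_k(x) ∈ U(x)` for all `k, x`. -/
def IsPolicy (π : ℕ → X → U) : Prop := ∀ k x, π k x ∈ S.Uc x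

/-- Distribution of the state `x_k` after `k` steps under policy `π` starting from `x₀`. -/
noncomputable def stateDist (π : ℕ → X → U) (x₀ : X) : ℕ → PMF X
  | 0 => PMF.pure x₀
  | k + 1 => (stateDist π x₀ k).bind fun x => (S.P x (π k x)).map (S.f x (π k x))

/-- Expected value `E^π_{x₀}[J(x_k)]` of a nonnegative function along the trajectory. -/
noncomputable def expect (π : ℕ → X → U) (x₀ : X) (k : ℕ) (J : X → ℝ≥0∞) : ℝ≥0∞ :=
  ∑' x, S.stateDist π x₀ k x * J x

/-- Expected cost `E^π_{x₀}[g(x_k, μ_k(x_k), w_k)]` of the `k`-th stage. -/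
noncomputable def stageCost (π : ℕ → X → U) (x₀ : X) (k : ℕ) : ℝ≥0∞ :=
  S.expect π x₀ k fun x => ∑' w, S.P x (π k x) w * S.g x (π k x) w

/-- The cost `J_π(x₀) = Σ_{k≥0} E^π_{x₀}[g(x_k, μ_k(x_k), w_k)]` of a policy. -/
noncomputable def Jcost (π : ℕ → X → U) (x₀ : X) : ℝ≥0∞ :=
  ∑' k, S.stageCost π x₀ k

/-- `r_k(π, x₀)`: probability that `x_k ≠ t` under `π` starting from `x₀`. -/
noncomputable def r (π : ℕ → X → U) (x₀ : X) (k : ℕ) : ℝ≥0∞ :=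
  S.expect π x₀ k fun x => if x = S.t then 0 else 1

/-- `Σ_{k≥0} r_k(π,x₀)`: expected number of steps to reach the destination. -/
noncomputable def N (π : ℕ → X → U) (x₀ : X) : ℝ≥0∞ := ∑' k, S.r π x₀ k

/-- A policy is proper at `x` if it is admissible, `J_π(x) < ∞` and `Σ_k r_k(π,x) < ∞`. -/
def ProperAt (π : ℕ → X → U) (x : X) : Prop :=
  S.IsPolicy π ∧ S.Jcost π x < ⊤ ∧ S.N π x < ⊤

/-- The optimal cost function `J*`. -/
noncomputable def Jstar (x : X) : ℝ≥0∞ := ⨅ π ∈ {π | S.IsPolicy π}, S.Jcost π x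

/-- The restricted optimal cost function `Ĵ` over policies proper at `x`
(infimum over the empty set is `∞`). -/
noncomputable def Jhat (x : X) : ℝ≥0∞ := ⨅ π ∈ {π | S.ProperAt π x}, S.Jcost π x

/-- The effective domain `X̂ = {x | Ĵ(x) < ∞}` of `Ĵ`. -/
def Xhat : Set X := {x | S.Jhat x < ⊤}

/-- Expected `k`-th stage cost in the `δ`-perturbed problem (stage cost `g + δ` off `t`). -/
noncomputable def stageCostPert (δ : ℝ≥0∞) (π : ℕ → X → U) (x₀ : X) (k : ℕ) : ℝ≥0∞ :=
  S.expect π x₀ k fun x =>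
    ∑' w, S.P x (π k x) w * (S.g x (π k x) w + if x = S.t then 0 else δ)

/-- The cost `J_{π,δ}` of a policy in the `δ`-perturbed problem. -/
noncomputable def Jpert (δ : ℝ≥0∞) (π : ℕ → X → U) (x₀ : X) : ℝ≥0∞ :=
  ∑' k, S.stageCostPert δ π x₀ k

/-- The optimal cost function `Ĵ_δ` of the `δ`-perturbed problem. -/
noncomputable def JhatPert (δ : ℝ≥0∞) (x : X) : ℝ≥0∞ :=
  ⨅ π ∈ {π | S.IsPolicy π}, S.Jpert δ π x

/-- `Q J x u = E_{w∼P(·|x,u)}[g(x,u,w) + J(f(x,u,w))]`. -/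
noncomputable def Q (J : X → ℝ≥0∞) (x : X) (u : U) : ℝ≥0∞ :=
  ∑' w, S.P x u w * (S.g x u w + J (S.f x u w))

/-- The Bellman operator `(TJ)(x) = inf_{u ∈ U(x)} E[g(x,u,w) + J(f(x,u,w))]`. -/
noncomputable def bellman (J : X → ℝ≥0∞) (x : X) : ℝ≥0∞ := ⨅ u ∈ S.Uc x, S.Q J x u

/-- The tail policy `π_k = (μ_k, μ_{k+1}, …)`. -/
def tail (π : ℕ → X → U) (k : ℕ) : ℕ → X → U := fun m => π (k + m)

/-- The set `Ŵ` of functions `J` with `J(t) = 0`, `Ĵ ≤ J`, and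
`E^π_{x₀}[J(x_k)] → 0` for every pair `(π, x₀)` with `π` proper at `x₀`. -/
def What : Set (X → ℝ≥0∞) :=
  {J | J S.t = 0 ∧ S.Jhat ≤ J ∧
    ∀ π x₀, S.ProperAt π x₀ → Tendsto (fun k => S.expect π x₀ k J) atTop (nhds 0)}

/-- The set `B` of functions `J` with `J(t) = 0` that are bounded over `X̂`. -/
def Bset : Set (X → ℝ≥0∞) :=
  {J | J S.t = 0 ∧ (⨆ x ∈ S.Xhat, J x) < ⊤}

/-- A policy is uniformly proper if it is admissible and the expected number of steps
to reach the destination is uniformly bounded over `X̂`. -/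
def UniformlyProper (π : ℕ → X → U) : Prop :=
  S.IsPolicy π ∧ (⨆ x ∈ S.Xhat, S.N π x) < ⊤

/-- The cost per stage `g` is (uniformly) bounded over `X × U × W`. -/
def BoundedCost : Prop := ∃ b : ℝ≥0∞, b < ⊤ ∧ ∀ x u w, S.g x u w ≤ b

end SSP

/-!
`Ĵ ∈ B`: on `X̂`, `Ĵ` is at most the cost of the uniformly proper policy, hence at most
`sup g · sup_{X̂} N`.

`TĴ ≤ Ĵ` because the tail of a proper policy is proper at every successor it reaches. For
`Ĵ ≤ TĴ`, perturb the problem by the cost `δ > 0` per stage off `t`. A policy of finite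
perturbed cost is proper, so `Ĵ ≤ Ĵ_δ`, and `Ĵ_δ ↓ Ĵ` as `δ ↓ 0`. The perturbed optimum
satisfies `Ĵ_δ ≤ T_δ Ĵ_δ`: play `u` first and then one policy that is `ε`-optimal for `Ĵ_δ`
from every state. At the successors of `x`, which lie in `X̂`, `Ĵ_δ ≤ (sup g + δ) · sup_{X̂} N`,
so monotone convergence lets `δ ↓ 0` pass through the expectation in `T`.

Maximality: a solution `J` of Bellman's equation satisfies `J(x) ≤ ∑_{k<n} E[g_k] + E[J(x_n)]`
along any policy; for `J ∈ B` and `π` proper at `x` the last term is at most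
`sup_{X̂} J · r_n(π, x) → 0`, because the states reached lie in `X̂`.
-/

open Topology

namespace PMF

variable {α β : Type*}

theorem tsum_pure_mul (a : α) (J : α → ℝ≥0∞) : ∑' z, PMF.pure a z * J z = J a := by
  rw [tsum_eq_single a fun z hz => by simp [PMF.pure_apply, hz]]
  simp [PMF.pure_apply]

theorem tsum_map_mul (p : PMF α) (f : α → β) (J : β → ℝ≥0∞) :
    ∑' y, p.map f y * J y = ∑' a, p a * J (f a) := by
  simp_rw [PMF.map_apply, ← ENNReal.tsum_mul_right]
  rw [ENNReal.tsum_comm]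
  refine tsum_congr fun a => ?_
  rw [tsum_eq_single (f a) fun y hy => by simp [hy]]
  simp

theorem tsum_bind_mul (p : PMF α) (q : α → PMF β) (J : β → ℝ≥0∞) :
    ∑' y, p.bind q y * J y = ∑' a, p a * ∑' y, q a y * J y := by
  simp_rw [PMF.bind_apply, ← ENNReal.tsum_mul_right, ← ENNReal.tsum_mul_left, mul_assoc]
  exact ENNReal.tsum_comm

theorem tsum_mul_const (p : PMF α) (c : ℝ≥0∞) : ∑' a, p a * c = c := by
  rw [ENNReal.tsum_mul_right, p.tsum_coe, one_mul]

theorem tsum_mul_add_const (p : PMF α) (F : α → ℝ≥0∞) (c : ℝ≥0∞) :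
    ∑' a, p a * (F a + c) = ∑' a, p a * F a + c := by
  simp_rw [mul_add]
  rw [ENNReal.tsum_add, p.tsum_mul_const]

end PMF

namespace ENNReal

variable {α : Type*}

theorem tsum_mul_le_tsum_mul_of_ne_zero {p F G : α → ℝ≥0∞} (h : ∀ a, p a ≠ 0 → F a ≤ G a) :
    ∑' a, p a * F a ≤ ∑' a, p a * G a := by
  refine ENNReal.tsum_le_tsum fun a => ?_
  by_cases ha : p a = 0
  · simp [ha]
  · exact mul_le_mul_right (h a ha) _

theorem tsum_iInf_of_antitone {F : ℕ → α → ℝ≥0∞} (hF : Antitone F) (h0 : ∑' a, F 0 a ≠ ∞) :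
    ∑' a, ⨅ n, F n a = ⨅ n, ∑' a, F n a := by
  let : MeasurableSpace α := ⊤
  have : MeasurableSingletonClass α := ⟨fun _ => trivial⟩
  simpa only [MeasureTheory.lintegral_count] using
    MeasureTheory.lintegral_iInf (μ := MeasureTheory.Measure.count)
      (fun _ => measurable_from_top) hF (by rwa [MeasureTheory.lintegral_count])

theorem sum_range_add_le_add_sum_range {a E e : ℕ → ℝ≥0∞}
    (h : ∀ k, a k + E (k + 1) ≤ E k + e k) (n : ℕ) :
    ∑ k ∈ Finset.range n, a k + E n ≤ E 0 + ∑ k ∈ Finset.range n, e k := by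
  induction n with
  | zero => simp
  | succ n ih =>
    calc ∑ k ∈ Finset.range (n + 1), a k + E (n + 1)
        = ∑ k ∈ Finset.range n, a k + (a n + E (n + 1)) := by
          rw [Finset.sum_range_succ, add_assoc]
      _ ≤ ∑ k ∈ Finset.range n, a k + E n + e n := by rw [add_assoc]; exact add_le_add le_rfl (h n)
      _ ≤ E 0 + ∑ k ∈ Finset.range (n + 1), e k := by
          rw [Finset.sum_range_succ, ← add_assoc]; gcongr

theorem le_sum_range_add {a E : ℕ → ℝ≥0∞} (h : ∀ k, E k ≤ a k + E (k + 1)) (n : ℕ) :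
    E 0 ≤ ∑ k ∈ Finset.range n, a k + E n := by
  induction n with
  | zero => simp
  | succ n ih =>
    calc E 0 ≤ ∑ k ∈ Finset.range n, a k + E n := ih
      _ ≤ ∑ k ∈ Finset.range n, a k + (a n + E (n + 1)) := by gcongr; exact h n
      _ = ∑ k ∈ Finset.range (n + 1), a k + E (n + 1) := by
          rw [Finset.sum_range_succ, add_assoc]

end ENNReal

namespace SSP

variable {X U W : Type*} [Countable W] (S : SSP X U W)

section Trajectory

theorem expect_zero (π : ℕ → X → U) (x : X) (J : X → ℝ≥0∞) : S.expect π x 0 J = J x :=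
  PMF.tsum_pure_mul x J

theorem expect_succ (π : ℕ → X → U) (x : X) (k : ℕ) (J : X → ℝ≥0∞) :
    S.expect π x (k + 1) J
      = S.expect π x k fun z => ∑' w, S.P z (π k z) w * J (S.f z (π k z) w) := by
  simp only [expect, stateDist, PMF.tsum_bind_mul, PMF.tsum_map_mul]

theorem tail_one_apply (π : ℕ → X → U) (k : ℕ) : tail π 1 k = π (k + 1) := by
  simp only [tail, Nat.add_comm]

theorem stateDist_succ' (π : ℕ → X → U) (x : X) (k : ℕ) :
    S.stateDist π x (k + 1)
      = ((S.P x (π 0 x)).map (S.f x (π 0 x))).bind fun y => S.stateDist (tail π 1) y k := by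
  induction k with
  | zero => simp only [stateDist, PMF.pure_bind, PMF.bind_pure]
  | succ k ih =>
    rw [stateDist, ih, PMF.bind_bind]
    simp only [stateDist, tail_one_apply]

theorem expect_succ' (π : ℕ → X → U) (x : X) (k : ℕ) (J : X → ℝ≥0∞) :
    S.expect π x (k + 1) J
      = ∑' w, S.P x (π 0 x) w * S.expect (tail π 1) (S.f x (π 0 x) w) k J := by
  simp only [expect, stateDist_succ', PMF.tsum_bind_mul, PMF.tsum_map_mul]

theorem expect_mono (π : ℕ → X → U) (x : X) (k : ℕ) {A B : X → ℝ≥0∞} (h : A ≤ B) :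
    S.expect π x k A ≤ S.expect π x k B :=
  ENNReal.tsum_le_tsum fun z => mul_le_mul_right (h z) _

theorem expect_add (π : ℕ → X → U) (x : X) (k : ℕ) (A B : X → ℝ≥0∞) :
    S.expect π x k (fun z => A z + B z) = S.expect π x k A + S.expect π x k B := by
  simp only [expect, mul_add]
  exact ENNReal.tsum_add

theorem expect_const_mul (π : ℕ → X → U) (x : X) (k : ℕ) (c : ℝ≥0∞) (A : X → ℝ≥0∞) :
    S.expect π x k (fun z => c * A z) = c * S.expect π x k A := by
  simp only [expect, ← ENNReal.tsum_mul_left, mul_left_comm]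

theorem expect_const (π : ℕ → X → U) (x : X) (k : ℕ) (c : ℝ≥0∞) :
    S.expect π x k (fun _ => c) = c :=
  PMF.tsum_mul_const _ c

theorem r_succ' (π : ℕ → X → U) (x : X) (k : ℕ) :
    S.r π x (k + 1) = ∑' w, S.P x (π 0 x) w * S.r (tail π 1) (S.f x (π 0 x) w) k :=
  S.expect_succ' π x k _

theorem tsum_expect_eq_add_tsum (H : (X → U) → X → ℝ≥0∞) (π : ℕ → X → U) (x : X) :
    ∑' k, S.expect π x k (H (π k))
      = H (π 0) x + ∑' w, S.P x (π 0 x) w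
          * ∑' k, S.expect (tail π 1) (S.f x (π 0 x) w) k (H (tail π 1 k)) := by
  rw [tsum_eq_zero_add' ENNReal.summable, S.expect_zero]
  congr 1
  simp only [S.expect_succ', ← tail_one_apply, ← ENNReal.tsum_mul_left]
  exact ENNReal.tsum_comm

end Trajectory

section Costs

theorem stageCostPert_eq (δ : ℝ≥0∞) (π : ℕ → X → U) (x : X) (k : ℕ) :
    S.stageCostPert δ π x k = S.stageCost π x k + δ * S.r π x k := by
  have h : ∀ z, ∑' w, S.P z (π k z) w * (S.g z (π k z) w + if z = S.t then 0 else δ)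
      = ∑' w, S.P z (π k z) w * S.g z (π k z) w + δ * if z = S.t then 0 else 1 := by
    intro z
    rw [PMF.tsum_mul_add_const]
    split_ifs <;> simp
  simp only [stageCostPert, h, expect_add, expect_const_mul]
  rfl

theorem Jpert_eq (δ : ℝ≥0∞) (π : ℕ → X → U) (x : X) :
    S.Jpert δ π x = S.Jcost π x + δ * S.N π x := by
  simp only [Jpert, stageCostPert_eq, ENNReal.tsum_add, ENNReal.tsum_mul_left]
  rfl

theorem Jpert_zero (π : ℕ → X → U) : S.Jpert 0 π = S.Jcost π := by
  funext x
  simp [Jpert_eq]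

theorem Q_eq_add (J : X → ℝ≥0∞) (x : X) (u : U) :
    S.Q J x u = ∑' w, S.P x u w * S.g x u w + ∑' w, S.P x u w * J (S.f x u w) := by
  simp only [Q, mul_add]
  exact ENNReal.tsum_add

theorem Jpert_eq_Q_tail (δ : ℝ≥0∞) (π : ℕ → X → U) (x : X) :
    S.Jpert δ π x = S.Q (S.Jpert δ (tail π 1)) x (π 0 x) + δ * if x = S.t then 0 else 1 := by
  have h := S.tsum_expect_eq_add_tsum
    (fun μ z => ∑' w, S.P z (μ z) w * (S.g z (μ z) w + if z = S.t then 0 else δ)) π x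
  rw [PMF.tsum_mul_add_const] at h
  refine h.trans ?_
  rw [Q_eq_add, add_right_comm]
  congr 1
  split_ifs <;> simp

theorem Jcost_eq_Q_tail (π : ℕ → X → U) (x : X) :
    S.Jcost π x = S.Q (S.Jcost (tail π 1)) x (π 0 x) := by
  simpa [Jpert_zero] using S.Jpert_eq_Q_tail 0 π x

theorem expect_Q (π : ℕ → X → U) (x : X) (k : ℕ) (J : X → ℝ≥0∞) :
    S.expect π x k (fun z => S.Q J z (π k z)) = S.stageCost π x k + S.expect π x (k + 1) J := by
  simp only [Q_eq_add, expect_add, expect_succ]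
  rfl

end Costs

section BellmanOperator

variable {J J' : X → ℝ≥0∞} {x : X} {u : U}

theorem Q_mono_of_ne_zero (h : ∀ w, S.P x u w ≠ 0 → J (S.f x u w) ≤ J' (S.f x u w)) :
    S.Q J x u ≤ S.Q J' x u :=
  ENNReal.tsum_mul_le_tsum_mul_of_ne_zero fun w hw => by gcongr; exact h w hw

theorem Q_mono (h : J ≤ J') : S.Q J x u ≤ S.Q J' x u :=
  S.Q_mono_of_ne_zero fun _ _ => h _

theorem Q_add_const (c : ℝ≥0∞) : S.Q (fun y => J y + c) x u = S.Q J x u + c := by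
  simp only [Q, ← add_assoc, PMF.tsum_mul_add_const]

theorem mul_le_Q (w : W) : S.P x u w * J (S.f x u w) ≤ S.Q J x u :=
  (mul_le_mul_right le_add_self _).trans (ENNReal.le_tsum w)

theorem lt_top_of_Q_lt_top (h : S.Q J x u < ⊤) {w : W} (hw : S.P x u w ≠ 0) :
    J (S.f x u w) < ⊤ :=
  ENNReal.lt_top_of_mul_ne_top_right ((S.mul_le_Q w).trans_lt h).ne hw

theorem Q_le_add {b K : ℝ≥0∞} (hg : ∀ w, S.g x u w ≤ b)
    (h : ∀ w, S.P x u w ≠ 0 → J (S.f x u w) ≤ K) : S.Q J x u ≤ b + K :=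
  (ENNReal.tsum_mul_le_tsum_mul_of_ne_zero fun w hw => add_le_add (hg w) (h w hw)).trans
    (PMF.tsum_mul_const _ _).le

theorem Q_iInf_of_antitone {J : ℕ → X → ℝ≥0∞} (hJ : Antitone J) (h0 : S.Q (J 0) x u ≠ ⊤) :
    S.Q (fun y => ⨅ n, J n y) x u = ⨅ n, S.Q (J n) x u := by
  have hF : Antitone fun n w => S.P x u w * (S.g x u w + J n (S.f x u w)) :=
    fun m n hmn w => by dsimp only; gcongr; exact hJ hmn _
  simp only [Q]
  rw [← ENNReal.tsum_iInf_of_antitone hF h0]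
  refine tsum_congr fun w => ?_
  rw [ENNReal.add_iInf, ENNReal.mul_iInf fun h => absurd h (PMF.apply_ne_top _ w)]

end BellmanOperator

section Properness

variable {S} {π : ℕ → X → U}

theorem isPolicy_tail (hπ : S.IsPolicy π) (k : ℕ) : S.IsPolicy (tail π k) :=
  fun m z => hπ (k + m) z

theorem properAt_of_Jpert_lt_top {δ : ℝ≥0∞} (hδ : δ ≠ 0) (hπ : S.IsPolicy π) {x : X}
    (h : S.Jpert δ π x < ⊤) : S.ProperAt π x := by
  rw [Jpert_eq, ENNReal.add_lt_top] at h
  exact ⟨hπ, h.1, ENNReal.lt_top_of_mul_ne_top_right h.2.ne hδ⟩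

theorem Jpert_lt_top_of_properAt {δ : ℝ≥0∞} (hδ : δ ≠ ⊤) {x : X} (hπ : S.ProperAt π x) :
    S.Jpert δ π x < ⊤ := by
  rw [Jpert_eq]
  exact ENNReal.add_lt_top.2 ⟨hπ.2.1, ENNReal.mul_lt_top hδ.lt_top hπ.2.2⟩

theorem properAt_tail {x : X} (hπ : S.ProperAt π x) {w : W} (hw : S.P x (π 0 x) w ≠ 0) :
    S.ProperAt (tail π 1) (S.f x (π 0 x) w) := by
  have hQ := S.Jpert_eq_Q_tail 1 π x ▸ Jpert_lt_top_of_properAt ENNReal.one_ne_top hπ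
  exact properAt_of_Jpert_lt_top one_ne_zero (isPolicy_tail hπ.1 1)
    (S.lt_top_of_Q_lt_top (le_self_add.trans_lt hQ) hw)

theorem Jhat_le_Jcost {x : X} (hπ : S.ProperAt π x) : S.Jhat x ≤ S.Jcost π x :=
  iInf₂_le π hπ

theorem mem_Xhat_of_properAt {x : X} (hπ : S.ProperAt π x) : x ∈ S.Xhat :=
  (Jhat_le_Jcost hπ).trans_lt hπ.2.1

theorem expect_t (hπ : S.IsPolicy π) (J : X → ℝ≥0∞) (k : ℕ) : S.expect π S.t k J = J S.t := by
  induction k generalizing π with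
  | zero => exact S.expect_zero π S.t J
  | succ k ih =>
    simp only [expect_succ', S.f_absorb _ (hπ 0 S.t), ih (isPolicy_tail hπ 1)]
    exact PMF.tsum_mul_const _ _

theorem Jpert_t (hπ : S.IsPolicy π) (δ : ℝ≥0∞) : S.Jpert δ π S.t = 0 := by
  simp [Jpert, stageCostPert, expect_t hπ, S.g_zero _ (hπ _ S.t)]

theorem Jhat_t (hπ : S.IsPolicy π) : S.Jhat S.t = 0 := by
  have hproper : S.ProperAt π S.t :=
    properAt_of_Jpert_lt_top one_ne_zero hπ (by simp [Jpert_t hπ])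
  refine le_antisymm ((Jhat_le_Jcost hproper).trans ?_) zero_le
  rw [← Jpert_zero, Jpert_t hπ]

/-- States reachable under a proper policy lie in `X̂`, where `J ≤ M`. -/
theorem expect_le_mul_r {J : X → ℝ≥0∞} (hJt : J S.t = 0) {M : ℝ≥0∞}
    (hM : ∀ z ∈ S.Xhat, J z ≤ M) {x : X} (hπ : S.ProperAt π x) (n : ℕ) :
    S.expect π x n J ≤ M * S.r π x n := by
  induction n generalizing π x with
  | zero =>
    rw [r, expect_zero, expect_zero]
    by_cases hx : x = S.t
    · simp [hx, hJt]
    · simpa [hx] using hM x (mem_Xhat_of_properAt hπ)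
  | succ n ih =>
    rw [expect_succ', r_succ', ← ENNReal.tsum_mul_left]
    calc ∑' w, S.P x (π 0 x) w * S.expect (tail π 1) (S.f x (π 0 x) w) n J
        ≤ ∑' w, S.P x (π 0 x) w * (M * S.r (tail π 1) (S.f x (π 0 x) w) n) :=
          ENNReal.tsum_mul_le_tsum_mul_of_ne_zero fun w hw => ih (properAt_tail hπ hw)
      _ = _ := by simp only [mul_left_comm]

theorem Q_Jhat_le_Jcost {x : X} (hπ : S.ProperAt π x) : S.Q S.Jhat x (π 0 x) ≤ S.Jcost π x := by
  rw [Jcost_eq_Q_tail]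
  exact S.Q_mono_of_ne_zero fun w hw => Jhat_le_Jcost (properAt_tail hπ hw)

theorem bellman_Jhat_le (x : X) : S.bellman S.Jhat x ≤ S.Jhat x :=
  le_iInf₂ fun π hπ => (iInf₂_le (π 0 x) (hπ.1 0 x)).trans (Q_Jhat_le_Jcost hπ)

end Properness

section Perturbation

variable {δ : ℝ≥0∞}

theorem JhatPert_le_Jpert {π : ℕ → X → U} (hπ : S.IsPolicy π) (x : X) :
    S.JhatPert δ x ≤ S.Jpert δ π x :=
  iInf₂_le π hπ

theorem JhatPert_mono {δ' : ℝ≥0∞} (h : δ ≤ δ') : S.JhatPert δ ≤ S.JhatPert δ' := fun x =>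
  iInf₂_mono fun π _ => by rw [Jpert_eq, Jpert_eq]; gcongr

theorem Jhat_le_JhatPert (hδ : δ ≠ 0) : S.Jhat ≤ S.JhatPert δ := fun x => by
  refine le_iInf₂ fun π hπ => ?_
  by_cases hfin : S.Jpert δ π x < ⊤
  · refine (Jhat_le_Jcost (properAt_of_Jpert_lt_top hδ hπ hfin)).trans ?_
    rw [Jpert_eq]
    exact le_self_add
  · rw [not_lt_top_iff.1 hfin]
    exact le_top

theorem iInf_JhatPert {δ : ℕ → ℝ≥0∞} (hδ0 : ∀ n, δ n ≠ 0) (hδ : Tendsto δ atTop (𝓝 0))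
    (x : X) : ⨅ n, S.JhatPert (δ n) x = S.Jhat x := by
  refine le_antisymm (le_iInf₂ fun π hπ => ?_) (le_iInf fun n => S.Jhat_le_JhatPert (hδ0 n) x)
  have hlim : Tendsto (fun n => S.Jcost π x + δ n * S.N π x) atTop (𝓝 (S.Jcost π x)) := by
    simpa using tendsto_const_nhds.add (ENNReal.Tendsto.mul_const hδ (Or.inr hπ.2.2.ne))
  refine ge_of_tendsto' hlim fun n => (iInf_le _ n).trans ?_
  rw [← Jpert_eq]
  exact S.JhatPert_le_Jpert hπ.1 x

theorem Q_JhatPert_add_le_Jpert {π : ℕ → X → U} (hπ : S.IsPolicy π) (x : X) :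
    S.Q (S.JhatPert δ) x (π 0 x) + δ * (if x = S.t then 0 else 1) ≤ S.Jpert δ π x := by
  rw [Jpert_eq_Q_tail]
  gcongr
  exact S.Q_mono fun y => S.JhatPert_le_Jpert (isPolicy_tail hπ 1) y

theorem exists_Q_JhatPert_add_le {ε : ℝ≥0∞} (hε : ε ≠ 0) (z : X) :
    ∃ u ∈ S.Uc z,
      S.Q (S.JhatPert δ) z u + δ * (if z = S.t then 0 else 1) ≤ S.JhatPert δ z + ε := by
  by_cases htop : S.JhatPert δ z = ⊤
  · obtain ⟨u, hu⟩ := S.Uc_nonempty z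
    exact ⟨u, hu, by simp [htop]⟩
  have hbellman : ⨅ u ∈ S.Uc z, (S.Q (S.JhatPert δ) z u + δ * if z = S.t then 0 else 1)
      ≤ S.JhatPert δ z :=
    le_iInf₂ fun π hπ => (iInf₂_le (π 0 z) (hπ 0 z)).trans (S.Q_JhatPert_add_le_Jpert hπ z)
  obtain ⟨u, hu⟩ := iInf_lt_iff.1 (hbellman.trans_lt (ENNReal.lt_add_right htop hε))
  obtain ⟨hu, hlt⟩ := iInf_lt_iff.1 hu
  exact ⟨u, hu, hlt.le⟩

/-- Choosing `ε_k`-optimal controls at stage `k` with `∑ ε_k < ε` gives one policy that is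
`ε`-optimal for the perturbed problem from every initial state simultaneously. -/
theorem exists_Jpert_le_JhatPert_add {ε : ℝ≥0∞} (hε : ε ≠ 0) :
    ∃ σ, S.IsPolicy σ ∧ ∀ x, S.Jpert δ σ x ≤ S.JhatPert δ x + ε := by
  obtain ⟨e, he0, hesum⟩ := ENNReal.exists_pos_sum_of_countable' hε ℕ
  choose σ hσU hσ using fun k z => S.exists_Q_JhatPert_add_le (δ := δ) (he0 k).ne' z
  refine ⟨σ, hσU, fun x => ?_⟩
  have hstep : ∀ k, (S.stageCost σ x k + δ * S.r σ x k) + S.expect σ x (k + 1) (S.JhatPert δ)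
      ≤ S.expect σ x k (S.JhatPert δ) + e k := by
    intro k
    calc S.stageCost σ x k + δ * S.r σ x k + S.expect σ x (k + 1) (S.JhatPert δ)
        = S.expect σ x k fun z =>
            S.Q (S.JhatPert δ) z (σ k z) + δ * if z = S.t then 0 else 1 := by
          rw [expect_add, expect_const_mul, expect_Q, add_right_comm]
          rfl
      _ ≤ S.expect σ x k fun z => S.JhatPert δ z + e k := S.expect_mono σ x k (hσ k)
      _ = S.expect σ x k (S.JhatPert δ) + e k := by rw [expect_add, expect_const]
  rw [Jpert, ENNReal.tsum_eq_iSup_nat]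
  refine iSup_le fun n => ?_
  calc ∑ k ∈ Finset.range n, S.stageCostPert δ σ x k
      ≤ ∑ k ∈ Finset.range n, (S.stageCost σ x k + δ * S.r σ x k)
          + S.expect σ x n (S.JhatPert δ) := by simp only [stageCostPert_eq, le_self_add]
    _ ≤ S.expect σ x 0 (S.JhatPert δ) + ∑ k ∈ Finset.range n, e k :=
        ENNReal.sum_range_add_le_add_sum_range hstep n
    _ ≤ S.JhatPert δ x + ε := by
        rw [expect_zero]
        exact add_le_add le_rfl ((ENNReal.sum_le_tsum _).trans hesum.le)

noncomputable def prepend (u : U) (x : X) (σ : ℕ → X → U) : ℕ → X → U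
  | 0 => fun z => if z = x then u else σ 0 z
  | k + 1 => σ k

theorem isPolicy_prepend {u : U} {x : X} (hu : u ∈ S.Uc x) {σ : ℕ → X → U}
    (hσ : S.IsPolicy σ) : S.IsPolicy (prepend u x σ) := by
  rintro (_ | k) z
  · by_cases hz : z = x
    · subst hz
      simpa [prepend] using hu
    · simpa [prepend, hz] using hσ 0 z
  · exact hσ k z

theorem tail_prepend (u : U) (x : X) (σ : ℕ → X → U) : tail (prepend u x σ) 1 = σ := by
  funext m
  simp only [tail_one_apply, prepend]

theorem JhatPert_le_Q_add {x : X} {u : U} (hu : u ∈ S.Uc x) :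
    S.JhatPert δ x ≤ S.Q (S.JhatPert δ) x u + δ * if x = S.t then 0 else 1 := by
  refine ENNReal.le_of_forall_pos_le_add fun ε hε _ => ?_
  obtain ⟨σ, hσ, hσle⟩ := S.exists_Jpert_le_JhatPert_add (δ := δ) (ENNReal.coe_ne_zero.2 hε.ne')
  calc S.JhatPert δ x ≤ S.Jpert δ (prepend u x σ) x :=
        S.JhatPert_le_Jpert (S.isPolicy_prepend hu hσ) x
    _ = S.Q (S.Jpert δ σ) x u + δ * if x = S.t then 0 else 1 := by
        rw [Jpert_eq_Q_tail, tail_prepend]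
        simp [prepend]
    _ ≤ S.Q (fun y => S.JhatPert δ y + ε) x u + δ * if x = S.t then 0 else 1 := by
        gcongr
        exact S.Q_mono hσle
    _ = _ := by rw [Q_add_const, add_right_comm]

end Perturbation

section BoundedCost

variable {S} {b : ℝ≥0∞} (hbg : ∀ x u w, S.g x u w ≤ b)
include hbg

theorem stageCost_le_mul_r {π : ℕ → X → U} (hπ : S.IsPolicy π) (x : X) (k : ℕ) :
    S.stageCost π x k ≤ b * S.r π x k := by
  rw [r, ← expect_const_mul]
  refine S.expect_mono π x k fun z => ?_
  by_cases hz : z = S.t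
  · subst hz
    simp [S.g_zero _ (hπ k _)]
  · simpa [hz] using (ENNReal.tsum_le_tsum fun w => mul_le_mul_right (hbg z (π k z) w) _).trans
      (PMF.tsum_mul_const _ b).le

theorem Jcost_le_mul_N {π : ℕ → X → U} (hπ : S.IsPolicy π) (x : X) :
    S.Jcost π x ≤ b * S.N π x := by
  rw [N, ← ENNReal.tsum_mul_left]
  exact ENNReal.tsum_le_tsum (stageCost_le_mul_r hbg hπ x)

variable {pb : ℕ → X → U} (hpb : S.UniformlyProper pb)
include hpb

theorem JhatPert_le_of_mem_Xhat (δ : ℝ≥0∞) {y : X} (hy : y ∈ S.Xhat) :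
    S.JhatPert δ y ≤ (b + δ) * ⨆ z ∈ S.Xhat, S.N pb z := by
  have hN : S.N pb y ≤ ⨆ z ∈ S.Xhat, S.N pb z := le_iSup₂ (f := fun z _ => S.N pb z) y hy
  calc S.JhatPert δ y ≤ S.Jcost pb y + δ * S.N pb y := by
        rw [← Jpert_eq]; exact S.JhatPert_le_Jpert hpb.1 y
    _ ≤ (b + δ) * S.N pb y := by rw [add_mul]; gcongr; exact Jcost_le_mul_N hbg hpb.1 y
    _ ≤ _ := by gcongr

theorem Jhat_mem_Bset (hb : b ≠ ⊤) : S.Jhat ∈ S.Bset := by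
  have hbound : ⨆ y ∈ S.Xhat, S.Jhat y ≤ (b + 1) * ⨆ z ∈ S.Xhat, S.N pb z :=
    iSup₂_le fun y hy =>
      (S.Jhat_le_JhatPert one_ne_zero y).trans (JhatPert_le_of_mem_Xhat hbg hpb 1 hy)
  refine ⟨Jhat_t hpb.1, hbound.trans_lt ?_⟩
  exact ENNReal.mul_lt_top (ENNReal.add_lt_top.2 ⟨hb.lt_top, ENNReal.one_lt_top⟩) hpb.2

theorem Jhat_le_Q (hb : b ≠ ⊤) {x : X} {u : U} (hu : u ∈ S.Uc x) :
    S.Jhat x ≤ S.Q S.Jhat x u := by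
  by_cases hQ : S.Q S.Jhat x u = ⊤
  · exact hQ ▸ le_top
  set δ : ℕ → ℝ≥0∞ := fun n => ((n : ℝ≥0∞) + 1)⁻¹
  have hδ0 : ∀ n, δ n ≠ 0 := fun n => by simp [δ]
  have hδ : Tendsto δ atTop (𝓝 0) :=
    (ENNReal.tendsto_inv_nat_nhds_zero.comp (tendsto_add_atTop_nat 1)).congr fun n => by simp [δ]
  have hanti : Antitone fun n => S.JhatPert (δ n) := fun m n hmn =>
    S.JhatPert_mono (ENNReal.inv_le_inv.2 (by gcongr))
  -- the successors of `x` lie in `X̂`, where `Ĵ_δ` is bounded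
  have hfin : S.Q (S.JhatPert (δ 0)) x u ≠ ⊤ := by
    refine ne_top_of_le_ne_top ?_ (S.Q_le_add (hbg x u) fun w hw =>
      JhatPert_le_of_mem_Xhat hbg hpb (δ 0) (S.lt_top_of_Q_lt_top (lt_top_iff_ne_top.2 hQ) hw))
    have : δ 0 = 1 := by simp [δ]
    rw [this]
    exact ENNReal.add_ne_top.2 ⟨hb, ENNReal.mul_ne_top (by simpa using hb) hpb.2.ne⟩
  have hlim : Tendsto (fun n => S.Q (S.JhatPert (δ n)) x u + δ n) atTop (𝓝 (S.Q S.Jhat x u)) := by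
    have hQlim := tendsto_atTop_iInf fun m n hmn => S.Q_mono (x := x) (u := u) (hanti hmn)
    rw [← S.Q_iInf_of_antitone hanti hfin] at hQlim
    simp_rw [S.iInf_JhatPert hδ0 hδ] at hQlim
    simpa using hQlim.add hδ
  refine ge_of_tendsto' hlim fun n => ?_
  calc S.Jhat x ≤ S.JhatPert (δ n) x := S.Jhat_le_JhatPert (hδ0 n) x
    _ ≤ S.Q (S.JhatPert (δ n)) x u + δ n * if x = S.t then 0 else 1 := S.JhatPert_le_Q_add hu
    _ ≤ S.Q (S.JhatPert (δ n)) x u + δ n := by gcongr; split_ifs <;> simp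

theorem Jhat_le_bellman (hb : b ≠ ⊤) (x : X) : S.Jhat x ≤ S.bellman S.Jhat x :=
  le_iInf₂ fun _ hu => Jhat_le_Q hbg hpb hb hu

end BoundedCost

section Maximality

variable {J : X → ℝ≥0∞}

theorem le_sum_stageCost_add_expect (hJ : ∀ z, J z = S.bellman J z) {π : ℕ → X → U}
    (hπ : S.IsPolicy π) (x : X) (n : ℕ) :
    J x ≤ ∑ k ∈ Finset.range n, S.stageCost π x k + S.expect π x n J := by
  rw [← S.expect_zero π x J]
  refine ENNReal.le_sum_range_add (a := S.stageCost π x) (E := fun k => S.expect π x k J)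
    (fun k => ?_) n
  rw [← expect_Q]
  exact S.expect_mono π x k fun z => (hJ z).trans_le (iInf₂_le _ (hπ k z))

theorem le_Jhat_of_bellman (hJB : J ∈ S.Bset) (hJ : ∀ z, J z = S.bellman J z) : J ≤ S.Jhat := by
  obtain ⟨hJt, hJbdd⟩ := hJB
  refine fun x => le_iInf₂ fun π hπ => ?_
  have hM : ∀ z ∈ S.Xhat, J z ≤ ⨆ y ∈ S.Xhat, J y :=
    fun z hz => le_iSup₂ (f := fun y _ => J y) z hz
  have hlim : Tendsto (fun n => S.Jcost π x + (⨆ y ∈ S.Xhat, J y) * S.r π x n) atTop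
      (𝓝 (S.Jcost π x)) := by
    simpa using tendsto_const_nhds.add
      (ENNReal.Tendsto.const_mul (ENNReal.tendsto_atTop_zero_of_tsum_ne_top hπ.2.2.ne)
        (Or.inr hJbdd.ne))
  refine ge_of_tendsto' hlim fun n => ?_
  calc J x ≤ ∑ k ∈ Finset.range n, S.stageCost π x k + S.expect π x n J :=
        S.le_sum_stageCost_add_expect hJ hπ.1 x n
    _ ≤ _ := add_le_add (ENNReal.sum_le_tsum _) (expect_le_mul_r hJt hM hπ n)

end Maximality

end SSP

/-- If `g` is bounded over `X×U×W` and there exists a uniformly proper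
policy, then `Ĵ` is the largest solution of Bellman's equation within `B`. -/
theorem Jhat_largest_in_Bset {X U W : Type*} [Countable W] (S : SSP X U W)
    (hb : S.BoundedCost) (hup : ∃ π : ℕ → X → U, S.UniformlyProper π) :
    S.Jhat ∈ S.Bset ∧ (∀ x, S.Jhat x = S.bellman S.Jhat x) ∧
    ∀ J ∈ S.Bset, (∀ x, J x = S.bellman J x) → J ≤ S.Jhat := by
  obtain ⟨b, hb, hbg⟩ := hb
  obtain ⟨pb, hpb⟩ := hup
  exact ⟨SSP.Jhat_mem_Bset hbg hpb hb.ne,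
    fun x => le_antisymm (SSP.Jhat_le_bellman hbg hpb hb.ne x) (S.bellman_Jhat_le x),
    fun J hJB hJ => S.le_Jhat_of_bellman hJB hJ⟩
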